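/- (Reordering identity) Let y x = Q x y with Q invertible central. Then for all natural numbers N: (x+y)(x+qy)(x+q^2 y)···(x+q^N y) = (x+Q^{-N} q^N y)(x+Q^{-(N-2)} q^{N-1} y)···(x+Q^{N-2} q y)(x+Q^N y), i.e. prod_{k=0}^N (x + q^k y) taken left-to-right equals prod_{k=0}^N (x + Q^{N-2k} q^k y) taken right-to-left (factor with k=0 rightmost). -/
import Mathlib

/-- Left-to-right ordered product `f 0 * f 1 * ⋯ * f (n-1)`. -/
def ascProd {A : Type*} [Ring A] (f : ℕ → A) : ℕ → A
  | 0 => 1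
  | n + 1 => ascProd f n * f n

/-- Right-to-left ordered product `f (n-1) * ⋯ * f 1 * f 0`. -/
def descProd {A : Type*} [Ring A] (f : ℕ → A) : ℕ → A
  | 0 => 1
  | n + 1 => f n * descProd f n

section aux
variable {R : Type*} [CommRing R] {A : Type*} [Ring A] [Algebra R A]

lemma swap_lemma (Q : Rˣ) (x y : A) (hyx : y * x = (Q : R) • (x * y)) (a b : R) :
    (x + a • y) * (x + b • y)
      = (x + (((Q⁻¹ : Rˣ) : R) * b) • y) * (x + ((Q : R) * a) • y) := by
  have hQ : ((Q⁻¹ : Rˣ) : R) * (Q : R) = 1 := Q.inv_mul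
  simp only [mul_add, add_mul, smul_add, smul_mul_assoc, mul_smul_comm, hyx, smul_smul]
  match_scalars
  any_goals ring
  any_goals linear_combination (-b) * hQ
  any_goals linear_combination (-(a * b)) * hQ

lemma move_lemma (Q : Rˣ) (x y : A) (hyx : y * x = (Q : R) • (x * y)) (c : ℕ → R) (b : R) (n : ℕ) :
    descProd (fun k => x + c k • y) n * (x + b • y)
      = (x + ((((Q⁻¹ : Rˣ) ^ n : Rˣ) : R) * b) • y)
        * descProd (fun k => x + ((Q : R) * c k) • y) n := by
  induction n with
  | zero => simp [descProd]
  | succ n ih =>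
    simp only [descProd, mul_assoc, ih]
    rw [← mul_assoc (x + c n • y), swap_lemma Q x y hyx]
    rw [mul_assoc]
    congr 2
    push_cast [pow_succ]
    ring
end aux

/-- reordering identity: if `y x = Q (x y)` then
    `(x+y)(x+qy)⋯(x+q^N y)
       = (x+Q^{-N}q^N y)(x+Q^{-(N-2)}q^{N-1} y)⋯(x+Q^{N-2}q y)(x+Q^N y)`,
    i.e. `∏_{k=0}^N (x+q^k y)` left-to-right equals
    `∏_{k=0}^N (x+Q^{N-2k}q^k y)` right-to-left (k = 0 factor rightmost). -/
theorem reordering_identity {R : Type*} [CommRing R] {A : Type*} [Ring A]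
    [Algebra R A] (q Q : Rˣ) (x y : A)
    (hyx : y * x = (Q : R) • (x * y)) (N : ℕ) :
    ascProd (fun k => x + ((q ^ k : Rˣ) : R) • y) (N + 1)
      = descProd
          (fun k => x + ((Q ^ ((N : ℤ) - 2 * (k : ℤ)) * (q : Rˣ) ^ k : Rˣ) : R) • y)
          (N + 1) := by
  induction N with
  | zero => simp [ascProd, descProd]
  | succ N ih =>
    show ascProd _ (N + 1) * _ = _
    rw [ih, move_lemma Q x y hyx]
    show _ = (x + _ • y) * descProd _ (N + 1)
    congr 1
    · congr 2
      rw [show (((N+1:ℕ):ℤ) - 2 * ((N+1:ℕ):ℤ)) = -((N+1:ℕ):ℤ) by ring,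
        zpow_neg, ← inv_zpow, zpow_natCast, Units.val_mul]
    · apply congrArg (fun f => descProd f (N + 1))
      funext k
      congr 1
      rw [← Units.val_mul]
      congr 1
      rw [← mul_assoc]
      congr 1
      rw [show (((N+1:ℕ):ℤ) - 2 * (k:ℤ)) = 1 + ((N:ℤ) - 2 * (k:ℤ)) by push_cast; ring,
        zpow_add, zpow_one]
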